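/- Let G⁻ = ({1,2,3,4}, R) be a holey 3-hypertournament with (2,4,3) ∈ R, (1,4,2) ∈ R, and with {1,2,3} and {1,3,4} holes. If (G⁻, R') is an H₄-free completion of G⁻ and (1,2,3) ∈ R', then (1,3,4) ∉ R'. -/
import Mathlib


def IsHyper3 {T : Type*} (R : T → T → T → Prop) : Prop :=
  (∀ a b c, R a b c → a ≠ b ∧ b ≠ c ∧ a ≠ c) ∧
  (∀ a b c, R a b c → R b c a) ∧
  (∀ a b c, a ≠ b → b ≠ c → a ≠ c → (R a b c ↔ ¬ R a c b))

/-- The 3-hypertournament H₄ on 4 points (automorphism group Alt(4)); with respect to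
the natural order of Fin 4 its hyperedges are {0,1,2} and {0,2,3}. -/
def H4rel : Fin 4 → Fin 4 → Fin 4 → Prop := fun x y z =>
  (x,y,z) = ((0,1,2) : Fin 4 × Fin 4 × Fin 4) ∨ (x,y,z) = ((1,2,0) : Fin 4 × Fin 4 × Fin 4) ∨
  (x,y,z) = ((2,0,1) : Fin 4 × Fin 4 × Fin 4) ∨ (x,y,z) = ((0,3,1) : Fin 4 × Fin 4 × Fin 4) ∨
  (x,y,z) = ((3,1,0) : Fin 4 × Fin 4 × Fin 4) ∨ (x,y,z) = ((1,0,3) : Fin 4 × Fin 4 × Fin 4) ∨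
  (x,y,z) = ((0,2,3) : Fin 4 × Fin 4 × Fin 4) ∨ (x,y,z) = ((2,3,0) : Fin 4 × Fin 4 × Fin 4) ∨
  (x,y,z) = ((3,0,2) : Fin 4 × Fin 4 × Fin 4) ∨ (x,y,z) = ((1,3,2) : Fin 4 × Fin 4 × Fin 4) ∨
  (x,y,z) = ((3,2,1) : Fin 4 × Fin 4 × Fin 4) ∨ (x,y,z) = ((2,1,3) : Fin 4 × Fin 4 × Fin 4)

/-- R contains no induced copy of H₄. -/
def H4FreeOn {A : Type*} (R : A → A → A → Prop) : Prop :=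
  ¬ ∃ f : Fin 4 → A, Function.Injective f ∧ ∀ x y z, H4rel x y z ↔ R (f x) (f y) (f z)

/-- the gadget G⁻ on vertices 0,1,2,3 (representing 1,2,3,4) has
(2,4,3)=(1,3,2) and (1,4,2)=(0,3,1) oriented (with their cyclic rotations) and holes
{1,2,3},{1,3,4}. In any H₄-free completion R', if (1,2,3)=(0,1,2) ∈ R' then
(1,3,4)=(0,2,3) ∉ R'. -/
theorem stmt9 (R' : Fin 4 → Fin 4 → Fin 4 → Prop)
    (hext : R' 1 3 2 ∧ R' 3 2 1 ∧ R' 2 1 3 ∧ R' 0 3 1 ∧ R' 3 1 0 ∧ R' 1 0 3)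
    (hhyper : IsHyper3 R') (hfree : H4FreeOn R')
    (h123 : R' 0 1 2) : ¬ R' 0 2 3 := by
  obtain ⟨h132, h321, h213, h031, h310, h103⟩ := hext
  obtain ⟨hirr, hcyc, hflip⟩ := hhyper
  intro h023
  apply hfree
  refine ⟨id, Function.injective_id, ?_⟩
  have h120 := hcyc _ _ _ h123
  have h201 := hcyc _ _ _ h120
  have h230 := hcyc _ _ _ h023
  have h302 := hcyc _ _ _ h230
  have n021 : ¬ R' 0 2 1 := (hflip 0 1 2 (by decide) (by decide) (by decide)).mp h123
  have n102 : ¬ R' 1 0 2 := (hflip 1 2 0 (by decide) (by decide) (by decide)).mp h120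
  have n210 : ¬ R' 2 1 0 := (hflip 2 0 1 (by decide) (by decide) (by decide)).mp h201
  have n013 : ¬ R' 0 1 3 := (hflip 0 3 1 (by decide) (by decide) (by decide)).mp h031
  have n301 : ¬ R' 3 0 1 := (hflip 3 1 0 (by decide) (by decide) (by decide)).mp h310
  have n130 : ¬ R' 1 3 0 := (hflip 1 0 3 (by decide) (by decide) (by decide)).mp h103
  have n032 : ¬ R' 0 3 2 := (hflip 0 2 3 (by decide) (by decide) (by decide)).mp h023
  have n203 : ¬ R' 2 0 3 := (hflip 2 3 0 (by decide) (by decide) (by decide)).mp h230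
  have n320 : ¬ R' 3 2 0 := (hflip 3 0 2 (by decide) (by decide) (by decide)).mp h302
  have n123 : ¬ R' 1 2 3 := (hflip 1 3 2 (by decide) (by decide) (by decide)).mp h132
  have n312 : ¬ R' 3 1 2 := (hflip 3 2 1 (by decide) (by decide) (by decide)).mp h321
  have n231 : ¬ R' 2 3 1 := (hflip 2 1 3 (by decide) (by decide) (by decide)).mp h213
  intro x y z
  fin_cases x <;> fin_cases y <;> fin_cases z <;> simp only [id_eq, H4rel] <;>
    first
      | exact iff_of_true (by decide) (by assumption)
      | exact iff_of_false (by decide) (by assumption)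
      | exact iff_of_false (by decide) (fun h => absurd (hirr _ _ _ h) (by decide))
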